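/- arXiv:0909.1984 — 4 statements merged into one kernel-verified Lean document; each statement's English description precedes it below -/
import Mathlib

section
/- Let I be a finite totally ordered alphabet and m ≥ 1. For r = 1,…,m let i⁽ʳ⁾ and j⁽ʳ⁾ be words of the same length d_r with i⁽ʳ⁾ ≤ j⁽ʳ⁾ in lexicographic order. Then the lexicographically largest shuffle of i⁽¹⁾,…,i⁽ᵐ⁾ is less than or equal to the lexicographically largest shuffle of j⁽¹⁾,…,j⁽ᵐ⁾. If in addition the strict inequality i⁽ʳ⁾ < j⁽ʳ⁾ holds for at least one r, then the lexicographically largest shuffle of i⁽¹⁾,…,i⁽ᵐ⁾ is strictly smaller than that of j⁽¹⁾,…,j⁽ᵐ⁾. -/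
/-- `a` and `b` lie in the same consecutive block determined by the list of
block lengths `ds` (block `r` occupies positions `[(ds.take r).sum, (ds.take (r+1)).sum)`). -/
def SameBlock (ds : List ℕ) (a b : ℕ) : Prop :=
  ∃ r < ds.length, (ds.take r).sum ≤ a ∧ a < (ds.take (r + 1)).sum ∧
    (ds.take r).sum ≤ b ∧ b < (ds.take (r + 1)).sum

/-- A shuffle permutation for the block lengths `ds`: a permutation of the positions of the
concatenation whose inverse is strictly increasing on each consecutive block. -/
def IsShufflePerm (ds : List ℕ) (σ : Equiv.Perm (Fin ds.sum)) : Prop :=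
  ∀ a b : Fin ds.sum, SameBlock ds a b → a < b → σ⁻¹ a < σ⁻¹ b

/-- The set of all shuffles (interleavings) of the words in the list `ws`: the words
`(u_{σ(1)}, …, u_{σ(d)})` produced by shuffle permutations `σ` applied to the concatenation. -/
def shuffles {I : Type*} (ws : List (List I)) : Set (List I) :=
  { w | ∃ σ : Equiv.Perm (Fin ((ws.map List.length).sum)),
      IsShufflePerm (ws.map List.length) σ ∧
      w = List.ofFn fun p => ws.flatten.get ((σ p).cast (List.length_flatten : ws.flatten.length = (ws.map List.length).sum).symm) }

/-!
Write the largest shuffle of the `i⁽ʳ⁾` as the shuffle by some shuffle permutation `σ`, and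
shuffle the `j⁽ʳ⁾` by the same `σ`. At the first position where the two words differ, both
letters are the `t`-th letters of `i⁽ʳ⁾` and `j⁽ʳ⁾` for one block `r`; since `σ` keeps every block
in order, the earlier letters of `i⁽ʳ⁾` and `j⁽ʳ⁾` occur before that position and so agree, and
`i⁽ʳ⁾ ≤ j⁽ʳ⁾` makes the letter from `i⁽ʳ⁾` the smaller one. Hence the largest shuffle of the
`i⁽ʳ⁾` is at most a shuffle of the `j⁽ʳ⁾`, and differs from it unless all `i⁽ʳ⁾ = j⁽ʳ⁾`.
-/

open Equiv List

namespace List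

variable {α : Type*}

theorem ofFn_le_ofFn_of_forall [LinearOrder α] {n : ℕ} {f g : Fin n → α}
    (h : ∀ p, (∀ q < p, f q = g q) → f p ≤ g p) : ofFn f ≤ ofFn g := by
  by_cases hfg : f = g
  · rw [hfg]
  obtain ⟨p, hp, hmin⟩ := WellFounded.has_min wellFounded_lt {p | f p ≠ g p}
    (Function.ne_iff.1 hfg)
  have hpre : ∀ q < p, f q = g q := fun q hq => not_not.1 fun hne => hmin q hne hq
  refine le_of_lt (List.lt_iff_exists.2 (Or.inr ⟨p, by simp, by simp, fun j hj => ?_, ?_⟩))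
  · simpa using hpre ⟨j, by omega⟩ hj
  · simpa using lt_of_le_of_ne (h p hpre) hp

theorem getElem_le_getElem_of_le [LinearOrder α] {l₁ l₂ : List α} (hle : l₁ ≤ l₂)
    (hlen : l₁.length = l₂.length) {t : ℕ} (h₁ : t < l₁.length) (h₂ : t < l₂.length)
    (hpre : ∀ s (hs : s < t), l₁[s] = l₂[s]) : l₁[t] ≤ l₂[t] := by
  rcases eq_or_lt_of_le hle with rfl | hlt
  · exact le_rfl
  rcases List.lt_iff_exists.1 hlt with ⟨-, hlt⟩ | ⟨i, hi₁, hi₂, hipre, hlt⟩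
  · omega
  rcases lt_trichotomy i t with hit | rfl | hti
  · exact absurd (hpre i hit) hlt.ne
  · exact hlt.le
  · exact (hipre t hti).le

theorem exists_eq_sum_take_add {ds : List ℕ} {a : ℕ} (ha : a < ds.sum) :
    ∃ r, ∃ hr : r < ds.length, ∃ t < ds[r], a = (ds.take r).sum + t := by
  induction ds generalizing a with
  | nil => simp at ha
  | cons d ds ih =>
    by_cases had : a < d
    · exact ⟨0, by simp, a, had, by simp⟩
    obtain ⟨r, hr, t, ht, hat⟩ := ih (a := a - d) (by simp at ha; omega)
    exact ⟨r + 1, by simpa using hr, t, ht, by simp; omega⟩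

theorem sum_take_add_lt_sum {ds : List ℕ} {r t : ℕ} (hr : r < ds.length) (ht : t < ds[r]) :
    (ds.take r).sum + t < ds.sum := by
  have := sum_take_succ ds r hr
  have := sum_take_add_sum_drop ds (r + 1)
  omega

theorem getElem_flatten_of_eq_sum_take_add {L : List (List α)} {ds : List ℕ}
    (hL : L.map length = ds) {r t a : ℕ} (hr : r < L.length) (ht : t < L[r].length)
    (ha : a = (ds.take r).sum + t) (h : a < L.flatten.length) : L.flatten[a] = L[r][t] := by
  subst hL ha
  have hdrop := congrArg (·[t]?) (drop_sum_flatten L r)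
  simp only [getElem?_drop, drop_eq_getElem_cons hr, flatten_cons] at hdrop
  rw [getElem?_append_left ht] at hdrop
  simpa [getElem?_eq_getElem h, getElem?_eq_getElem ht] using hdrop

end List

theorem sameBlock_sum_take_add {ds : List ℕ} {r s t : ℕ} (hr : r < ds.length) (hs : s < ds[r])
    (ht : t < ds[r]) : SameBlock ds ((ds.take r).sum + s) ((ds.take r).sum + t) := by
  have := sum_take_succ ds r hr
  exact ⟨r, hr, by omega, by omega, by omega, by omega⟩

section ShuffleWord

variable {I : Type*}

/-- The block lengths `ds` are a separate parameter so that one `σ` can shuffle two families of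
words of equal lengths. -/
def shuffleWord (ws : List (List I)) {ds : List ℕ} (hds : ws.map length = ds)
    (σ : Perm (Fin ds.sum)) : List I :=
  ofFn fun p => ws.flatten[(σ p : ℕ)]'(by rw [length_flatten, hds]; exact (σ p).isLt)

theorem shuffleWord_mem_shuffles {ws : List (List I)} {ds : List ℕ} (hds : ws.map length = ds)
    {σ : Perm (Fin ds.sum)} (hσ : IsShufflePerm ds σ) : shuffleWord ws hds σ ∈ shuffles ws := by
  subst hds
  exact ⟨σ, hσ, rfl⟩

theorem shuffleWord_le_shuffleWord [LinearOrder I] {ds : List ℕ} {σ : Perm (Fin ds.sum)}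
    (hσ : IsShufflePerm ds σ) {ws vs : List (List I)} (hw : ws.map length = ds)
    (hv : vs.map length = ds) (hle : Forall₂ (· ≤ ·) ws vs) :
    shuffleWord ws hw σ ≤ shuffleWord vs hv σ := by
  refine ofFn_le_ofFn_of_forall fun p hpre => ?_
  obtain ⟨r, hr, t, ht, hp⟩ := exists_eq_sum_take_add (σ p).isLt
  have hrw : r < ws.length := by simpa [← hw] using hr
  have hrv : r < vs.length := by simpa [← hv] using hr
  have hwr : ws[r].length = ds[r] := by simp [← hw]
  have hvr : vs[r].length = ds[r] := by simp [← hv]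
  rw [getElem_flatten_of_eq_sum_take_add hw hrw (hwr ▸ ht) hp,
    getElem_flatten_of_eq_sum_take_add hv hrv (hvr ▸ ht) hp]
  refine getElem_le_getElem_of_le (by simpa using hle.get hrw hrv) (by rw [hwr, hvr]) _ _
    fun s hs => ?_
  -- `σ` keeps block `r` in order, so its letter `s < t` sits before position `p`.
  let b : Fin ds.sum := ⟨(ds.take r).sum + s, sum_take_add_lt_sum hr (hs.trans ht)⟩
  have hbp : σ⁻¹ b < σ⁻¹ (σ p) :=
    hσ b (σ p) (hp ▸ sameBlock_sum_take_add hr (hs.trans ht) ht)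
      (by rw [Fin.lt_def, hp]; exact Nat.add_lt_add_left hs _)
  have hletter := hpre (σ⁻¹ b) (by simpa using hbp)
  simp only [Perm.coe_inv, apply_symm_apply] at hletter
  rwa [getElem_flatten_of_eq_sum_take_add hw hrw (hwr ▸ hs.trans ht) rfl,
    getElem_flatten_of_eq_sum_take_add hv hrv (hvr ▸ hs.trans ht) rfl] at hletter

theorem eq_of_shuffleWord_eq {ds : List ℕ} {σ : Perm (Fin ds.sum)} {ws vs : List (List I)}
    (hw : ws.map length = ds) (hv : vs.map length = ds)
    (h : shuffleWord ws hw σ = shuffleWord vs hv σ) : ws = vs := by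
  refine eq_iff_flatten_eq.2 ⟨ext_getElem (by simp [hw, hv]) fun a ha _ => ?_, hw.trans hv.symm⟩
  have ha' : a < ds.sum := by simpa [hw] using ha
  simpa using congrFun (ofFn_injective h) (σ⁻¹ ⟨a, ha'⟩)

end ShuffleWord

theorem largest_shuffle_mono_general {I : Type*} [LinearOrder I] {m : ℕ}
    (iw jw : Fin m → List I)
    (hlen : ∀ r, (iw r).length = (jw r).length)
    (hle : ∀ r, iw r ≤ jw r)
    (Mi Mj : List I)
    (hMi : IsGreatest (shuffles (List.ofFn iw)) Mi)
    (hMj : IsGreatest (shuffles (List.ofFn jw)) Mj) :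
    Mi ≤ Mj ∧ ((∃ r, iw r < jw r) → Mi < Mj) := by
  obtain ⟨⟨σ, hσ, rfl⟩, -⟩ := hMi
  have hds : (ofFn jw).map length = (ofFn iw).map length := by
    simp [map_ofFn, Function.comp_def, hlen]
  have hwMj : shuffleWord (ofFn jw) hds σ ≤ Mj := hMj.2 (shuffleWord_mem_shuffles hds hσ)
  have hle' : Forall₂ (· ≤ ·) (ofFn iw) (ofFn jw) :=
    forall₂_of_length_eq_of_get (by simp) (by simpa using fun r hr => hle ⟨r, hr⟩)
  have hMiw : shuffleWord (ofFn iw) rfl σ ≤ shuffleWord (ofFn jw) hds σ :=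
    shuffleWord_le_shuffleWord hσ rfl hds hle'
  change shuffleWord (ofFn iw) rfl σ ≤ Mj ∧ (_ → shuffleWord (ofFn iw) rfl σ < Mj)
  refine ⟨hMiw.trans hwMj, fun ⟨r, hr⟩ => (hMiw.lt_of_ne fun h => hr.ne ?_).trans_le hwMj⟩
  exact congrFun (ofFn_injective (eq_of_shuffleWord_eq rfl hds h)) r

/-- If `i⁽ʳ⁾ ≤ j⁽ʳ⁾` are words of the same length for `r = 1, …, m`, then the
lexicographically largest shuffle of the `i⁽ʳ⁾` is `≤` the lexicographically largest shuffle of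
the `j⁽ʳ⁾`; and if moreover `i⁽ʳ⁾ < j⁽ʳ⁾` for some `r`, the inequality of largest shuffles
is strict. -/
theorem largest_shuffle_mono {I : Type*} [Fintype I] [LinearOrder I] {m : ℕ} (hm : 1 ≤ m)
    (iw jw : Fin m → List I)
    (hlen : ∀ r, (iw r).length = (jw r).length)
    (hle : ∀ r, iw r ≤ jw r)
    (Mi Mj : List I)
    (hMi : IsGreatest (shuffles (List.ofFn iw)) Mi)
    (hMj : IsGreatest (shuffles (List.ofFn jw)) Mj) :
    Mi ≤ Mj ∧ ((∃ r, iw r < jw r) → Mi < Mj) :=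
  largest_shuffle_mono_general iw jw hlen hle Mi Mj hMi hMj
end

section
/- Let I be a finite totally ordered alphabet and let i, j, k, l be words over I such that i and k are nonempty, l = jk (concatenation), l is a Lyndon word, and i ≤ l in lexicographic order. Then the concatenation j i k is lexicographically strictly smaller than the concatenation l i, unless j is empty and k = l = i (in which case j i k equals l i). -/
/-- A nonempty word is Lyndon if it is lexicographically strictly smaller than each of its
proper nonempty suffixes. -/
def IsLyndonWord {I : Type*} [LinearOrder I] (l : List I) : Prop :=
  l ≠ [] ∧ ∀ t s : List I, t ≠ [] → s ≠ [] → l = t ++ s → l < s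

/-
If `i < k`, then `i ++ k < k ++ i` for every nonempty suffix `k` of the Lyndon word `l`; prepending
`j` then gives the claim. This is proved by induction on the length of the suffix `m`. Either `i`
and `m` differ at some position inside `i`, and then `i ++ m` and `m ++ i` differ there in the same
way; or `m = i ++ m'`, where `m'` is a proper suffix of `l`, so `i ≤ l < m'`, and the induction
hypothesis `i ++ m' < m' ++ i` gives `i ++ (i ++ m') < i ++ (m' ++ i)`.
-/

namespace List

theorem append_lt_append_of_lt_of_not_prefix {α : Type*} [LT α] {l₁ l₂ : List α} (h : l₁ < l₂)
    (hp : ¬l₁ <+: l₂) (t₁ t₂ : List α) : l₁ ++ t₁ < l₂ ++ t₂ := by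
  induction h with
  | nil => exact absurd nil_prefix hp
  | cons _ ih => exact Lex.cons (ih fun hp' => hp (prefix_cons_inj _ |>.mpr hp'))
  | rel hab => exact Lex.rel hab

end List

theorem IsLyndonWord.append_lt_append_of_suffix {I : Type*} [LinearOrder I] {l i m : List I}
    (hl : IsLyndonWord l) (hi : i ≠ []) (hil : i ≤ l) (hm : m <:+ l) (him : i < m) :
    i ++ m < m ++ i := by
  by_cases hpre : i <+: m
  · obtain ⟨m', rfl⟩ := hpre
    obtain ⟨p, hp⟩ := hm
    have hm' : m' ≠ [] := by
      rintro rfl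
      simp at him
    have hlm' : l < m' := hl.2 (p ++ i) m' (by simp [hi]) hm' (by simp [← hp])
    have hrec : i ++ m' < m' ++ i :=
      hl.append_lt_append_of_suffix hi hil ⟨p ++ i, by simp [← hp]⟩ (lt_of_le_of_lt hil hlm')
    simpa using List.append_left_lt (l₁ := i) hrec
  · exact List.append_lt_append_of_lt_of_not_prefix him hpre m i
termination_by m.length
decreasing_by
  subst_vars
  simp [List.length_pos_iff.mpr hi]

theorem lyndon_insertion_general {I : Type*} [LinearOrder I] (i j k l : List I)
    (hi : i ≠ []) (hk : k ≠ []) (hl : l = j ++ k)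
    (hLyn : IsLyndonWord l) (hil : i ≤ l) :
    (¬(j = [] ∧ k = i ∧ l = i) → j ++ i ++ k < l ++ i) ∧
    ((j = [] ∧ k = i ∧ l = i) → j ++ i ++ k = l ++ i) := by
  constructor
  · intro hne
    have hik : i < k := by
      by_cases hj : j = []
      · subst hj
        simp only [List.nil_append] at hl
        subst hl
        exact lt_of_le_of_ne hil fun h => hne ⟨rfl, h.symm, h.symm⟩
      · exact lt_of_le_of_lt hil (hLyn.2 j k hj hk hl)
    have hswap : i ++ k < k ++ i :=
      hLyn.append_lt_append_of_suffix hi hil ⟨j, hl.symm⟩ hik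
    simpa [hl] using List.append_left_lt (l₁ := j) hswap
  · rintro ⟨rfl, rfl, rfl⟩
    rfl

/-- Let `i, j, k, l` be words with `i` and `k` nonempty, `l = j ++ k`,
`l` Lyndon, and `i ≤ l`.  Then `j ++ i ++ k < l ++ i`, unless `j` is empty and `k = l = i`,
in which case the two words are equal. -/
theorem lyndon_insertion {I : Type*} [Fintype I] [LinearOrder I] (i j k l : List I)
    (hi : i ≠ []) (hk : k ≠ []) (hl : l = j ++ k)
    (hLyn : IsLyndonWord l) (hil : i ≤ l) :
    (¬(j = [] ∧ k = i ∧ l = i) → j ++ i ++ k < l ++ i) ∧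
    ((j = [] ∧ k = i ∧ l = i) → j ++ i ++ k = l ++ i) :=
  lyndon_insertion_general i j k l hi hk hl hLyn hil
end

section
/- Let F be a field, ℓ ≥ 2, and consider the Khovanov–Lauda–Rouquier algebra R_α of type B_ℓ (with the Cartan datum I = {1,…,ℓ}, 1·1 = 2, i·i = 4 for i ≥ 2, 1·2 = −2, i·(i+1) = −2 for i ≥ 2, i·j = 0 if |i−j| ≥ 2, and the natural total order 1 < 2 < ⋯ < ℓ, so that in particular Q_{1,2}(u,v) = u² − v), where α = 2α_1 + α_2 + ⋯ + α_n for some 2 ≤ n ≤ ℓ and d = n + 1. Then the following formulas define a representation of R_α on the two-dimensional F-vector space with basis {v_1, v_{−1}}: e(j) v_a = v_a if j = (1,1,2,3,…,n) and e(j) v_a = 0 otherwise (a = ±1); y_r v_1 = 0 for 1 ≤ r ≤ d; y_1 v_{−1} = −v_1, y_2 v_{−1} = v_1, and y_s v_{−1} = 0 for 3 ≤ s ≤ d; ψ_1 v_1 = v_{−1}, ψ_r v_1 = 0 for 2 ≤ r < d, and ψ_s v_{−1} = 0 for 1 ≤ s < d. -/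
/-- The multiset of letters (weight) of a word `w : Fin d → Fin ℓ`; two words have the same
`countWt` iff they have the same weight `α ∈ Q₊`. -/
def countWt {d ℓ : ℕ} (w : Fin d → Fin ℓ) : Fin ℓ → ℕ :=
  fun i => (Finset.univ.filter fun p => w p = i).card

/-- The polynomial `Q_{ij}(u,v)` of type `B_ℓ` (natural order, letters `0, …, ℓ-1` standing
for `1, …, ℓ`; `1·1 = 2`, `i·i = 4` for `i ≥ 2`, `1·2 = −2`, `i·(i+1) = −2` for `i ≥ 2`),
evaluated at a pair of commuting ring elements: `Q_{1,2}(u,v) = u² − v`,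
`Q_{2,1}(u,v) = −u + v²`, `Q_{i,i+1}(u,v) = u − v` and `Q_{i+1,i}(u,v) = −u + v` for `i ≥ 2`,
`Q_{ii} = 0`, and `Q_{ij} = 1` when `i·j = 0`. -/
def QB {ℓ : ℕ} {M : Type*} [Ring M] (i j : Fin ℓ) (u v : M) : M :=
  if i = j then 0
  else if (i : ℕ) = 0 ∧ (j : ℕ) = 1 then u ^ 2 - v
  else if (i : ℕ) = 1 ∧ (j : ℕ) = 0 then v ^ 2 - u
  else if (i : ℕ) + 1 = (j : ℕ) then u - v
  else if (j : ℕ) + 1 = (i : ℕ) then v - u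
  else 1

/-- The polynomial `(Q_{ij}(w,v) - Q_{ij}(u,v))/(w - u)` of type `B_ℓ` (computed first as a
polynomial), evaluated at `u = y_r`, `w = y_{r+2}`: it is `w + u` for `(i,j) = (1,2)`,
`1` if `j = i + 1` with `i ≥ 2`, `-1` if `i = j + 1`, and `0` otherwise. -/
def QBder {ℓ : ℕ} {M : Type*} [Ring M] (i j : Fin ℓ) (u w : M) : M :=
  if i = j then 0
  else if (i : ℕ) = 0 ∧ (j : ℕ) = 1 then w + u
  else if (i : ℕ) + 1 = (j : ℕ) then 1
  else if (j : ℕ) + 1 = (i : ℕ) then -1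
  else 0

/-!
The given operators are `y_1 = -raise`, `y_2 = raise`, `ψ_1 = lower`, all other `y_s` and `ψ_r`
being zero, where `raise : v₋₁ ↦ v₁ ↦ 0` and `lower : v₁ ↦ v₋₁ ↦ 0`. Since `raise² = lower² = 0`
and `raise * lower + lower * raise = 1`, every product of two `y`'s or of two `ψ`'s vanishes, and
the only relations with a nonzero side are the two mixed ones at `r = 1`, where `i_1 = i_2` in the
word `(1,1,2,…,n)`. The relations for `ψ_r² e(i)` hold because `Q_{i_r,i_{r+1}}(y_r, y_{r+1})` is
`Q_{11} = 0` for `r = 1`, `y_2² - y_3 = 0` for `r = 2` and `y_r - y_{r+1} = 0` beyond; the braid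
relation holds because `ψ_{r+1} = 0` and `i_r ≠ i_{r+2}`.
-/

namespace KLRCuspidalB

open LinearMap

variable {F : Type*} [Field F]

theorem end_ext {f g : Module.End F (F × F)} (h₁ : f (1, 0) = g (1, 0))
    (h₂ : f (0, 1) = g (0, 1)) : f = g :=
  prod_ext (ext_ring h₁) (ext_ring h₂)

def raise : Module.End F (F × F) := inl F F F ∘ₗ snd F F F

def lower : Module.End F (F × F) := inr F F F ∘ₗ fst F F F

@[simp] theorem raise_apply (x : F × F) : raise x = (x.2, 0) := rfl

@[simp] theorem lower_apply (x : F × F) : lower x = (0, x.1) := rfl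

def yOp : ℕ → Module.End F (F × F)
  | 0 => -raise
  | 1 => raise
  | _ + 2 => 0

def psiOp : ℕ → Module.End F (F × F)
  | 0 => lower
  | _ + 1 => 0

theorem yOp_mul_yOp (r s : ℕ) : (yOp r : Module.End F (F × F)) * yOp s = 0 := by
  rcases r with _ | _ | r <;> rcases s with _ | _ | s <;>
    exact end_ext (by simp [yOp]) (by simp [yOp])

theorem psiOp_mul_psiOp (r s : ℕ) : (psiOp r : Module.End F (F × F)) * psiOp s = 0 := by
  rcases r with _ | r <;> rcases s with _ | s <;>
    exact end_ext (by simp [psiOp]) (by simp [psiOp])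

theorem yOp_mul_psiOp_comm {r s : ℕ} (h₀ : r ≠ s) (h₁ : r ≠ s + 1) :
    (yOp r : Module.End F (F × F)) * psiOp s = psiOp s * yOp r := by
  rcases s with _ | s
  · obtain ⟨r, rfl⟩ : ∃ k, r = k + 2 := ⟨r - 2, by omega⟩
    simp [yOp]
  · simp [psiOp]

theorem yOp_succ_mul_psiOp_sub_psiOp_mul_yOp (r : ℕ) :
    (yOp (r + 1) : Module.End F (F × F)) * psiOp r - psiOp r * yOp r =
      if r = 0 then 1 else 0 := by
  rcases r with _ | r
  · exact end_ext (by simp [yOp, psiOp]) (by simp [yOp, psiOp])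
  · simp [psiOp]

theorem yOp_mul_psiOp_sub_psiOp_mul_yOp_succ (r : ℕ) :
    (yOp r : Module.End F (F × F)) * psiOp r - psiOp r * yOp (r + 1) =
      if r = 0 then -1 else 0 := by
  rcases r with _ | r
  · exact end_ext (by simp [yOp, psiOp]) (by simp [yOp, psiOp])
  · simp [psiOp]

theorem eq_yOp {d : ℕ} {Y : ℕ → Module.End F (F × F)}
    (hYv1 : ∀ r, r < d → Y r ((1 : F), (0 : F)) = 0)
    (hY0 : Y 0 ((0 : F), (1 : F)) = (-1, 0))
    (hY1 : Y 1 ((0 : F), (1 : F)) = (1, 0))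
    (hYs : ∀ s, 2 ≤ s → s < d → Y s ((0 : F), (1 : F)) = 0) :
    ∀ r < d, Y r = yOp r := by
  intro r hr
  refine end_ext ?_ ?_
  · rcases r with _ | _ | r <;> simp [yOp, hYv1 _ hr, Prod.mk_zero_zero]
  · rcases r with _ | _ | r
    · simp [yOp, hY0]
    · simp [yOp, hY1]
    · simp [yOp, hYs _ (by omega) hr]

theorem eq_psiOp {d : ℕ} {P : ℕ → Module.End F (F × F)}
    (hP0 : P 0 ((1 : F), (0 : F)) = (0, 1))
    (hPr : ∀ r, 1 ≤ r → r + 1 < d → P r ((1 : F), (0 : F)) = 0)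
    (hPs : ∀ s, s + 1 < d → P s ((0 : F), (1 : F)) = 0) :
    ∀ r, r + 1 < d → P r = psiOp r := by
  intro r hr
  refine end_ext ?_ ?_
  · rcases r with _ | r
    · simp [psiOp, hP0]
    · simp [psiOp, hPr _ (by omega) hr]
  · rcases r with _ | r <;> simp [psiOp, hPs _ hr, Prod.mk_zero_zero]

theorem QB_of_val_eq_succ {ℓ : ℕ} {M : Type*} [Ring M] {i j : Fin ℓ} (h : (j : ℕ) = i + 1)
    (u v : M) : QB i j u v = if (i : ℕ) = 0 then u ^ 2 - v else u - v := by
  have hij : i ≠ j := fun hij => by simp [hij] at h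
  rw [QB, if_neg hij]
  split_ifs <;> first | rfl | omega

/-- The word `(1,1,2,…,n)`, with letters shifted down by one. -/
def IsCuspidalWord {d ℓ : ℕ} (w₀ : Fin d → Fin ℓ) : Prop :=
  ∀ p : Fin d, (w₀ p : ℕ) = if (p : ℕ) ≤ 1 then 0 else (p : ℕ) - 1

namespace IsCuspidalWord

variable {d ℓ : ℕ} {w₀ : Fin d → Fin ℓ}

theorem apply_eq_apply_succ_iff (h : IsCuspidalWord w₀) {r : ℕ} (hr : r + 1 < d) :
    w₀ ⟨r, Nat.lt_of_succ_lt hr⟩ = w₀ ⟨r + 1, hr⟩ ↔ r = 0 := by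
  rw [Fin.ext_iff, h, h]
  dsimp only
  split_ifs <;> omega

theorem apply_ne_apply_add_two (h : IsCuspidalWord w₀) {r : ℕ} (hr : r + 2 < d) :
    w₀ ⟨r, Nat.lt_of_add_right_lt hr⟩ ≠ w₀ ⟨r + 2, hr⟩ := by
  rw [Ne, Fin.ext_iff, h, h]
  dsimp only
  split_ifs <;> omega

theorem comp_swap_zero_one (h : IsCuspidalWord w₀) (hd : 1 < d) :
    w₀ ∘ Equiv.swap ⟨0, Nat.zero_lt_of_lt hd⟩ ⟨1, hd⟩ = w₀ := by
  have h01 := (h.apply_eq_apply_succ_iff hd).2 rfl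
  rw [Equiv.comp_swap_eq_update, h01, Function.update_eq_self, ← h01, Function.update_eq_self]

theorem QB_yOp_eq_zero (h : IsCuspidalWord w₀) {r : ℕ} (hr : r + 1 < d) :
    QB (w₀ ⟨r, Nat.lt_of_succ_lt hr⟩) (w₀ ⟨r + 1, hr⟩)
      (yOp r) (yOp (r + 1) : Module.End F (F × F)) = 0 := by
  rcases r with _ | r
  · simp [QB, (h.apply_eq_apply_succ_iff hr).2 rfl]
  · have hsucc : (w₀ ⟨r + 2, hr⟩ : ℕ) = w₀ ⟨r + 1, by omega⟩ + 1 := by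
      rw [h, h]
      dsimp only
      split_ifs <;> omega
    rw [QB_of_val_eq_succ hsucc, h, pow_two, yOp_mul_yOp]
    rcases r with _ | r <;> simp [yOp]

end IsCuspidalWord

section Relations

variable {d ℓ : ℕ} {w₀ : Fin d → Fin ℓ} {E : (Fin d → Fin ℓ) → Module.End F (F × F)}
  {Y P : ℕ → Module.End F (F × F)}

theorem e_mul_e (hE : ∀ w, E w = if w = w₀ then 1 else 0) (w w' : Fin d → Fin ℓ) :
    E w * E w' = if w = w' then E w else 0 := by
  simp only [hE]
  split_ifs <;> simp_all

theorem sum_e (hE : ∀ w, E w = if w = w₀ then 1 else 0) {s : Finset (Fin d → Fin ℓ)}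
    (hs : w₀ ∈ s) : ∑ w ∈ s, E w = 1 := by
  simp [hE, hs]

theorem commute_e (hE : ∀ w, E w = if w = w₀ then 1 else 0) (A : Module.End F (F × F))
    (w : Fin d → Fin ℓ) : A * E w = E w * A := by
  rw [hE]
  split_ifs <;> simp

theorem e_comp_swap_zero_one (h : IsCuspidalWord w₀) (hE : ∀ w, E w = if w = w₀ then 1 else 0)
    (hd : 1 < d) (w : Fin d → Fin ℓ) :
    E (w ∘ Equiv.swap ⟨0, Nat.zero_lt_of_lt hd⟩ ⟨1, hd⟩) = E w := by
  have hw : w ∘ Equiv.swap ⟨0, Nat.zero_lt_of_lt hd⟩ ⟨1, hd⟩ = w₀ ↔ w = w₀ := by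
    rw [← Equiv.symm_swap, Equiv.comp_symm_eq, h.comp_swap_zero_one hd]
  simp only [hE, hw]

theorem psi_mul_e (h : IsCuspidalWord w₀) (hE : ∀ w, E w = if w = w₀ then 1 else 0)
    (hP : ∀ r, r + 1 < d → P r = psiOp r) {r : ℕ} (hr : r + 1 < d) (w : Fin d → Fin ℓ) :
    P r * E w = E (w ∘ Equiv.swap ⟨r, Nat.lt_of_succ_lt hr⟩ ⟨r + 1, hr⟩) * P r := by
  rw [hP r hr]
  rcases r with _ | r
  · rw [e_comp_swap_zero_one h hE hr, commute_e hE]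
  · simp [psiOp]

theorem y_mul_y_comm (hY : ∀ r < d, Y r = yOp r) {r s : ℕ} (hr : r < d) (hs : s < d) :
    Y r * Y s = Y s * Y r := by
  rw [hY r hr, hY s hs, yOp_mul_yOp, yOp_mul_yOp]

theorem y_mul_psi_comm (hY : ∀ r < d, Y r = yOp r) (hP : ∀ r, r + 1 < d → P r = psiOp r)
    {r s : ℕ} (hr : r < d) (hs : s + 1 < d) (h₀ : r ≠ s) (h₁ : r ≠ s + 1) :
    Y r * P s = P s * Y r := by
  rw [hY r hr, hP s hs]
  exact yOp_mul_psiOp_comm h₀ h₁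

theorem y_succ_mul_psi_sub_psi_mul_y_mul_e (h : IsCuspidalWord w₀)
    (hE : ∀ w, E w = if w = w₀ then 1 else 0) (hY : ∀ r < d, Y r = yOp r)
    (hP : ∀ r, r + 1 < d → P r = psiOp r) {r : ℕ} (hr : r + 1 < d) (w : Fin d → Fin ℓ) :
    (Y (r + 1) * P r - P r * Y r) * E w =
      if w ⟨r, Nat.lt_of_succ_lt hr⟩ = w ⟨r + 1, hr⟩ then E w else 0 := by
  rw [hY (r + 1) hr, hY r (by omega), hP r hr, yOp_succ_mul_psiOp_sub_psiOp_mul_yOp]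
  by_cases hw : w = w₀
  · subst hw
    simp only [h.apply_eq_apply_succ_iff hr]
    split_ifs <;> simp
  · simp [hE, hw]

theorem y_mul_psi_sub_psi_mul_y_succ_mul_e (h : IsCuspidalWord w₀)
    (hE : ∀ w, E w = if w = w₀ then 1 else 0) (hY : ∀ r < d, Y r = yOp r)
    (hP : ∀ r, r + 1 < d → P r = psiOp r) {r : ℕ} (hr : r + 1 < d) (w : Fin d → Fin ℓ) :
    (Y r * P r - P r * Y (r + 1)) * E w =
      if w ⟨r, Nat.lt_of_succ_lt hr⟩ = w ⟨r + 1, hr⟩ then -E w else 0 := by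
  rw [hY (r + 1) hr, hY r (by omega), hP r hr, yOp_mul_psiOp_sub_psiOp_mul_yOp_succ]
  by_cases hw : w = w₀
  · subst hw
    simp only [h.apply_eq_apply_succ_iff hr]
    split_ifs
    exacts [neg_one_mul (E w), zero_mul (E w)]
  · simp [hE, hw]

theorem psi_mul_psi_mul_e (h : IsCuspidalWord w₀) (hE : ∀ w, E w = if w = w₀ then 1 else 0)
    (hY : ∀ r < d, Y r = yOp r) (hP : ∀ r, r + 1 < d → P r = psiOp r) {r : ℕ} (hr : r + 1 < d)
    (w : Fin d → Fin ℓ) :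
    P r * P r * E w =
      QB (w ⟨r, Nat.lt_of_succ_lt hr⟩) (w ⟨r + 1, hr⟩) (Y r) (Y (r + 1)) * E w := by
  rw [hP r hr, hY r (by omega), hY (r + 1) hr, psiOp_mul_psiOp, zero_mul]
  by_cases hw : w = w₀
  · subst hw
    rw [h.QB_yOp_eq_zero hr, zero_mul]
  · simp [hE, hw]

theorem psi_mul_psi_comm (hP : ∀ r, r + 1 < d → P r = psiOp r) {r s : ℕ} (hr : r + 1 < d)
    (hs : s + 1 < d) : P r * P s = P s * P r := by
  rw [hP r hr, hP s hs, psiOp_mul_psiOp, psiOp_mul_psiOp]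

theorem psi_braid_mul_e (h : IsCuspidalWord w₀) (hE : ∀ w, E w = if w = w₀ then 1 else 0)
    (hP : ∀ r, r + 1 < d → P r = psiOp r) {r : ℕ} (hr : r + 2 < d) (w : Fin d → Fin ℓ) :
    (P (r + 1) * P r * P (r + 1) - P r * P (r + 1) * P r) * E w =
      if w ⟨r, Nat.lt_of_add_right_lt hr⟩ = w ⟨r + 2, hr⟩ then
        QBder (w ⟨r, Nat.lt_of_add_right_lt hr⟩) (w ⟨r + 1, Nat.lt_of_succ_lt hr⟩)
          (Y r) (Y (r + 2)) * E w
      else 0 := by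
  rw [hP (r + 1) hr]
  by_cases hw : w = w₀
  · subst hw
    rw [if_neg (h.apply_ne_apply_add_two hr)]
    simp [psiOp]
  · simp [hE, hw]

end Relations

end KLRCuspidalB

open KLRCuspidalB

/-- Letters and indices are `0`-based: `y_1, …, y_d` are `Y 0, …, Y (d-1)`, `ψ_1, …, ψ_{d-1}` are
`P 0, …, P (d-2)`, and `v₁ = (1, 0)`, `v₋₁ = (0, 1)`. -/
theorem KLR_typeB_cuspidal_two_dimensional (F : Type*) [Field F] (ℓ : ℕ) (d : ℕ)
    (w₀ : Fin d → Fin ℓ)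
    (hw₀ : ∀ p : Fin d, (w₀ p : ℕ) = if (p : ℕ) ≤ 1 then 0 else (p : ℕ) - 1)
    (E : (Fin d → Fin ℓ) → Module.End F (F × F))
    (hE : ∀ w, E w = if w = w₀ then 1 else 0)
    (Y P : ℕ → Module.End F (F × F))
    (hYv1 : ∀ r, r < d → Y r ((1 : F), (0 : F)) = 0)
    (hY0 : Y 0 ((0 : F), (1 : F)) = (-1, 0))
    (hY1 : Y 1 ((0 : F), (1 : F)) = (1, 0))
    (hYs : ∀ s, 2 ≤ s → s < d → Y s ((0 : F), (1 : F)) = 0)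
    (hP0 : P 0 ((1 : F), (0 : F)) = (0, 1))
    (hPr : ∀ r, 1 ≤ r → r + 1 < d → P r ((1 : F), (0 : F)) = 0)
    (hPs : ∀ s, s + 1 < d → P s ((0 : F), (1 : F)) = 0) :
    -- e(i) e(j) = δ_{i,j} e(i)
    (∀ w w' : Fin d → Fin ℓ, countWt w = countWt w₀ → countWt w' = countWt w₀ →
      E w * E w' = if w = w' then E w else 0) ∧
    -- Σ_{i ∈ W^α} e(i) = 1
    (∑ w ∈ Finset.univ.filter (fun w : Fin d → Fin ℓ => countWt w = countWt w₀), E w = 1) ∧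
    -- y_r e(i) = e(i) y_r
    (∀ r, r < d → ∀ w : Fin d → Fin ℓ, countWt w = countWt w₀ →
      Y r * E w = E w * Y r) ∧
    -- ψ_r e(i) = e(s_r i) ψ_r
    (∀ r, ∀ hr : r + 1 < d, ∀ w : Fin d → Fin ℓ, countWt w = countWt w₀ →
      P r * E w = E (w ∘ Equiv.swap (⟨r, by omega⟩ : Fin d) ⟨r + 1, hr⟩) * P r) ∧
    -- y_r y_s = y_s y_r
    (∀ r s, r < d → s < d → Y r * Y s = Y s * Y r) ∧
    -- y_r ψ_s = ψ_s y_r for r ≠ s, s+1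
    (∀ r s, r < d → s + 1 < d → r ≠ s → r ≠ s + 1 → Y r * P s = P s * Y r) ∧
    -- (y_{r+1} ψ_r - ψ_r y_r) e(i)
    (∀ r, ∀ hr : r + 1 < d, ∀ w : Fin d → Fin ℓ, countWt w = countWt w₀ →
      (Y (r + 1) * P r - P r * Y r) * E w =
        if w (⟨r, by omega⟩ : Fin d) = w ⟨r + 1, hr⟩ then E w else 0) ∧
    -- (y_r ψ_r - ψ_r y_{r+1}) e(i)
    (∀ r, ∀ hr : r + 1 < d, ∀ w : Fin d → Fin ℓ, countWt w = countWt w₀ →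
      (Y r * P r - P r * Y (r + 1)) * E w =
        if w (⟨r, by omega⟩ : Fin d) = w ⟨r + 1, hr⟩ then -E w else 0) ∧
    -- ψ_r² e(i) = Q_{i_r, i_{r+1}}(y_r, y_{r+1}) e(i)
    (∀ r, ∀ hr : r + 1 < d, ∀ w : Fin d → Fin ℓ, countWt w = countWt w₀ →
      P r * P r * E w =
        QB (w (⟨r, by omega⟩ : Fin d)) (w ⟨r + 1, hr⟩) (Y r) (Y (r + 1)) * E w) ∧
    -- ψ_r ψ_s = ψ_s ψ_r for |r - s| > 1
    (∀ r s, r + 1 < d → s + 1 < d → (r + 1 < s ∨ s + 1 < r) → P r * P s = P s * P r) ∧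
    -- braid relation
    (∀ r, ∀ hr : r + 2 < d, ∀ w : Fin d → Fin ℓ, countWt w = countWt w₀ →
      (P (r + 1) * P r * P (r + 1) - P r * P (r + 1) * P r) * E w =
        if w (⟨r, by omega⟩ : Fin d) = w ⟨r + 2, hr⟩ then
          QBder (w (⟨r, by omega⟩ : Fin d)) (w (⟨r + 1, by omega⟩ : Fin d))
            (Y r) (Y (r + 2)) * E w
        else 0) := by
  have hY := eq_yOp hYv1 hY0 hY1 hYs
  have hP := eq_psiOp hP0 hPr hPs
  exact ⟨fun w w' _ _ => e_mul_e hE w w',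
    sum_e hE (by simp),
    fun r _ w _ => commute_e hE (Y r) w,
    fun r hr w _ => psi_mul_e hw₀ hE hP hr w,
    fun r s hr hs => y_mul_y_comm hY hr hs,
    fun r s hr hs h₀ h₁ => y_mul_psi_comm hY hP hr hs h₀ h₁,
    fun r hr w _ => y_succ_mul_psi_sub_psi_mul_y_mul_e hw₀ hE hY hP hr w,
    fun r hr w _ => y_mul_psi_sub_psi_mul_y_succ_mul_e hw₀ hE hY hP hr w,
    fun r hr w _ => psi_mul_psi_mul_e hw₀ hE hY hP hr w,
    fun r s hr hs _ => psi_mul_psi_comm hP hr hs,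
    fun r hr w _ => psi_braid_mul_e hw₀ hE hP hr w⟩
end

section
/- Let F be a field and consider the Khovanov–Lauda–Rouquier algebra R_α of type G_2 (with the Cartan datum I = {1,2}, 1·1 = 2, 2·2 = 6, 1·2 = −3, so a_{12} = −3 and a_{21} = −1, and the total order 1 < 2, so that Q_{1,2}(u,v) = u³ − v), where α = 2α_1 + α_2 and d = 3. Then the following formulas define a representation of R_α on the two-dimensional F-vector space with basis {v_1, v_{−1}}: e(j) v_a = v_a if j = (1,1,2) and e(j) v_a = 0 otherwise (a = ±1); y_1 v_1 = y_2 v_1 = y_3 v_1 = 0; y_1 v_{−1} = −v_1, y_2 v_{−1} = v_1, y_3 v_{−1} = 0; ψ_1 v_1 = v_{−1}, ψ_2 v_1 = 0, ψ_1 v_{−1} = 0, ψ_2 v_{−1} = 0. -/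
/-- The polynomial `Q_{ij}(u,v)` of type `G₂` (letters `0, 1` standing for `1, 2`;
`1·1 = 2`, `2·2 = 6`, `1·2 = −3`, so `a_{12} = −3`, `a_{21} = −1`), evaluated at a pair of
commuting ring elements: `Q_{11} = Q_{22} = 0`, `Q_{1,2}(u,v) = u³ − v`,
`Q_{2,1}(u,v) = −u + v³`. -/
def QG {M : Type*} [Ring M] (i j : Fin 2) (u v : M) : M :=
  if i = j then 0
  else if (i : ℕ) = 0 then u ^ 3 - v
  else v ^ 3 - u

/-- The polynomial `(Q_{ij}(w,v) - Q_{ij}(u,v))/(w - u)` of type `G₂` (computed first as a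
polynomial), evaluated at `u = y_r`, `w = y_{r+2}`: it is `w² + wu + u²` for `(i,j) = (1,2)`,
`-1` for `(i,j) = (2,1)`, and `0` if `i = j`. -/
def QGder {M : Type*} [Ring M] (i j : Fin 2) (u w : M) : M :=
  if i = j then 0
  else if (i : ℕ) = 0 then w ^ 2 + w * u + u ^ 2
  else -1

section SingleOne

variable {ι A : Type*} [DecidableEq ι]

theorem Pi.single_one_apply_mul_apply [MulZeroOneClass A] (i j k : ι) :
    (Pi.single i 1 : ι → A) j * (Pi.single i 1 : ι → A) k =
      if j = k then (Pi.single i 1 : ι → A) j else 0 := by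
  rcases eq_or_ne j i with rfl | hj <;> rcases eq_or_ne j k with rfl | hk <;> simp [*]

theorem Pi.commute_single_one_apply [MulZeroOneClass A] (x : A) (i j : ι) :
    Commute x ((Pi.single i 1 : ι → A) j) := by
  rcases eq_or_ne j i with rfl | h
  · simp
  · simp [h]

theorem Pi.single_apply_comp_swap {α β : Type*} [DecidableEq (α → β)] [DecidableEq α]
    [Zero A] {w₀ : α → β} {a b : α} (h : w₀ a = w₀ b) (x : A) (w : α → β) :
    (Pi.single w₀ x : (α → β) → A) (w ∘ Equiv.swap a b) = (Pi.single w₀ x : (α → β) → A) w := by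
  have hw₀ : w₀ ∘ Equiv.swap a b = w₀ := by
    funext c
    rcases eq_or_ne c a with rfl | hca
    · simp [h]
    rcases eq_or_ne c b with rfl | hcb
    · simp [h]
    · simp [Equiv.swap_apply_of_ne_of_ne hca hcb]
  have hiff : w ∘ Equiv.swap a b = w₀ ↔ w = w₀ := by
    rw [← Equiv.symm_swap, Equiv.comp_symm_eq, hw₀]
  simp only [Pi.single_apply, hiff]

end SingleOne

section TwoByTwo

variable {R : Type*} [Semiring R]

theorem LinearMap.ext_finTwoProd {f g : Module.End R (R × R)}
    (h₁ : f (1, 0) = g (1, 0)) (h₂ : f (0, 1) = g (0, 1)) : f = g :=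
  (Module.Basis.finTwoProd R).ext fun i => by fin_cases i <;> simpa

def raise : Module.End R (R × R) := (LinearMap.inl R R R).comp (LinearMap.snd R R R)

def lower : Module.End R (R × R) := (LinearMap.inr R R R).comp (LinearMap.fst R R R)

@[simp] theorem raise_apply (x : R × R) : raise x = (x.2, 0) := rfl

@[simp] theorem lower_apply (x : R × R) : lower x = (0, x.1) := rfl

end TwoByTwo

/-- Letters are `0`-indexed: letter `k ∈ {1, 2}` is `⟨k-1, _⟩ : Fin 2`; `y_1, y_2, y_3` are
`Y 0, Y 1, Y 2` and `ψ_1, ψ_2` are `P 0, P 1`. -/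
theorem KLR_typeG2_cuspidal_two_dimensional (F : Type*) [Field F]
    (w₀ : Fin 3 → Fin 2)
    (hw₀ : ∀ p : Fin 3, (w₀ p : ℕ) = if (p : ℕ) ≤ 1 then 0 else 1)
    (E : (Fin 3 → Fin 2) → Module.End F (F × F))
    (hE : ∀ w, E w = if w = w₀ then 1 else 0)
    (Y P : ℕ → Module.End F (F × F))
    (hYv1 : ∀ r, r < 3 → Y r ((1 : F), (0 : F)) = 0)
    (hY0 : Y 0 ((0 : F), (1 : F)) = (-1, 0))
    (hY1 : Y 1 ((0 : F), (1 : F)) = (1, 0))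
    (hY2 : Y 2 ((0 : F), (1 : F)) = 0)
    (hP0v1 : P 0 ((1 : F), (0 : F)) = (0, 1))
    (hP1v1 : P 1 ((1 : F), (0 : F)) = 0)
    (hP0v2 : P 0 ((0 : F), (1 : F)) = 0)
    (hP1v2 : P 1 ((0 : F), (1 : F)) = 0) :
    -- e(i) e(j) = δ_{i,j} e(i)
    (∀ w w' : Fin 3 → Fin 2, countWt w = countWt w₀ → countWt w' = countWt w₀ →
      E w * E w' = if w = w' then E w else 0) ∧
    -- Σ_{i ∈ W^α} e(i) = 1
    (∑ w ∈ Finset.univ.filter (fun w : Fin 3 → Fin 2 => countWt w = countWt w₀), E w = 1) ∧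
    -- y_r e(i) = e(i) y_r
    (∀ r, r < 3 → ∀ w : Fin 3 → Fin 2, countWt w = countWt w₀ →
      Y r * E w = E w * Y r) ∧
    -- ψ_r e(i) = e(s_r i) ψ_r
    (∀ r, ∀ hr : r + 1 < 3, ∀ w : Fin 3 → Fin 2, countWt w = countWt w₀ →
      P r * E w = E (w ∘ Equiv.swap (⟨r, by omega⟩ : Fin 3) ⟨r + 1, hr⟩) * P r) ∧
    -- y_r y_s = y_s y_r
    (∀ r s, r < 3 → s < 3 → Y r * Y s = Y s * Y r) ∧
    -- y_r ψ_s = ψ_s y_r for r ≠ s, s+1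
    (∀ r s, r < 3 → s + 1 < 3 → r ≠ s → r ≠ s + 1 → Y r * P s = P s * Y r) ∧
    -- (y_{r+1} ψ_r - ψ_r y_r) e(i)
    (∀ r, ∀ hr : r + 1 < 3, ∀ w : Fin 3 → Fin 2, countWt w = countWt w₀ →
      (Y (r + 1) * P r - P r * Y r) * E w =
        if w (⟨r, by omega⟩ : Fin 3) = w ⟨r + 1, hr⟩ then E w else 0) ∧
    -- (y_r ψ_r - ψ_r y_{r+1}) e(i)
    (∀ r, ∀ hr : r + 1 < 3, ∀ w : Fin 3 → Fin 2, countWt w = countWt w₀ →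
      (Y r * P r - P r * Y (r + 1)) * E w =
        if w (⟨r, by omega⟩ : Fin 3) = w ⟨r + 1, hr⟩ then -E w else 0) ∧
    -- ψ_r² e(i) = Q_{i_r, i_{r+1}}(y_r, y_{r+1}) e(i)
    (∀ r, ∀ hr : r + 1 < 3, ∀ w : Fin 3 → Fin 2, countWt w = countWt w₀ →
      P r * P r * E w =
        QG (w (⟨r, by omega⟩ : Fin 3)) (w ⟨r + 1, hr⟩) (Y r) (Y (r + 1)) * E w) ∧
    -- ψ_r ψ_s = ψ_s ψ_r for |r - s| > 1
    (∀ r s, r + 1 < 3 → s + 1 < 3 → (r + 1 < s ∨ s + 1 < r) → P r * P s = P s * P r) ∧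
    -- braid relation
    (∀ r, ∀ hr : r + 2 < 3, ∀ w : Fin 3 → Fin 2, countWt w = countWt w₀ →
      (P (r + 1) * P r * P (r + 1) - P r * P (r + 1) * P r) * E w =
        if w (⟨r, by omega⟩ : Fin 3) = w ⟨r + 2, hr⟩ then
          QGder (w (⟨r, by omega⟩ : Fin 3)) (w (⟨r + 1, by omega⟩ : Fin 3))
            (Y r) (Y (r + 2)) * E w
        else 0) := by
  obtain rfl : w₀ = ![0, 0, 1] := funext fun p => by fin_cases p <;> exact Fin.ext (hw₀ _)
  obtain rfl : E = Pi.single ![0, 0, 1] 1 :=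
    funext fun w => (hE w).trans (Pi.single_apply _ _ _).symm
  have Y0 : Y 0 = -raise := LinearMap.ext_finTwoProd (by simp [Prod.ext_iff, hYv1]) (by simp [hY0])
  have Y1 : Y 1 = raise := LinearMap.ext_finTwoProd (by simp [Prod.ext_iff, hYv1]) (by simp [hY1])
  have Y2 : Y 2 = 0 := LinearMap.ext_finTwoProd (by simp [hYv1]) (by simp [hY2])
  have P0 : P 0 = lower := LinearMap.ext_finTwoProd (by simp [hP0v1]) (by simp [Prod.ext_iff, hP0v2])
  have P1 : P 1 = 0 := LinearMap.ext_finTwoProd (by simp [hP1v1]) (by simp [hP1v2])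
  refine ⟨fun w w' _ _ => Pi.single_one_apply_mul_apply _ w w',
    by simp [Finset.sum_pi_single'],
    fun r _ w _ => (Pi.commute_single_one_apply _ _ w).eq, ?_, ?_, ?_, ?_, ?_, ?_,
    fun r s _ _ _ => by omega, ?_⟩
  · intro r hr w _
    obtain rfl | rfl : r = 0 ∨ r = 1 := by omega
    · rw [Pi.single_apply_comp_swap (by simp)]
      exact (Pi.commute_single_one_apply _ _ w).eq
    · simp [P1]
  · intro r s hr hs
    interval_cases r <;> interval_cases s <;> ext <;> simp [Y0, Y1, Y2]
  · intro r s hr hs _ _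
    rcases (by omega : s = 0 ∨ s = 1) with rfl | rfl <;> interval_cases r <;> simp_all
  all_goals
    intro r hr w _
    rcases eq_or_ne w ![0, 0, 1] with rfl | hw
    · rcases (by omega : r = 0 ∨ r = 1) with rfl | rfl <;> first | omega |
        (ext <;> simp [Y0, Y1, Y2, P0, P1, QG, pow_succ])
    · simp [hw]
end
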